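/- arXiv:2205.09890 — 2 statements merged into one kernel-verified Lean document; each statement's English description precedes it below -/
import Mathlib

section
/- Let S, K, σ, τ > 0, let Φ be the standard normal cumulative distribution function, d1 = (ln(S/K) + (σ²/2)τ)/(σ√τ) and d2 = d1 − σ√τ. Then the zero-rate Black-Scholes put value strictly exceeds its intrinsic value: K·Φ(−d2) − S·Φ(−d1) > K − S. Consequently, for 0 < S < K, the number of at-the-money puts (strike K) needed to fund the collateral shortfall, α(S) = x·(K − S)/(K·Φ(−d2) − S·Φ(−d1)), satisfies α(S) < x for every reserve size x > 0. -/
open Real Filter MeasureTheory ProbabilityTheory Set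

/-- The cumulative distribution function of the standard normal distribution
(Gaussian measure on ℝ with mean 0 and variance 1). -/
noncomputable def Φ (x : ℝ) : ℝ :=
  (ProbabilityTheory.gaussianReal 0 1 (Set.Iic x)).toReal

lemma Phi_eq (x : ℝ) : Φ x = ∫ t in Iic x, gaussianPDFReal 0 1 t := by
  rw [Φ, gaussianReal_apply_eq_integral 0 one_ne_zero,
    ENNReal.toReal_ofReal (integral_nonneg fun t => gaussianPDFReal_nonneg 0 1 t)]

lemma phi_even (x : ℝ) : gaussianPDFReal 0 1 (-x) = gaussianPDFReal 0 1 x := by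
  simp [gaussianPDFReal, neg_sq]

lemma Phi_neg (x : ℝ) : Φ (-x) = 1 - Φ x := by
  have hint : Integrable (gaussianPDFReal 0 1) := integrable_gaussianPDFReal 0 1
  have htot : (∫ t, gaussianPDFReal 0 1 t) = 1 := integral_gaussianPDFReal_eq_one 0 one_ne_zero
  have hsplit : (∫ t in Iic x, gaussianPDFReal 0 1 t) + ∫ t in Ioi x, gaussianPDFReal 0 1 t = 1 := by
    rw [← htot, ← setIntegral_union (Iic_disjoint_Ioi le_rfl) measurableSet_Ioi
      hint.integrableOn hint.integrableOn, Iic_union_Ioi, setIntegral_univ]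
  have hneg : (∫ t in Iic (-x), gaussianPDFReal 0 1 t) = ∫ t in Ioi x, gaussianPDFReal 0 1 t := by
    have := integral_comp_neg_Iic (-x) (gaussianPDFReal 0 1)
    simp only [neg_neg] at this
    rw [← this]
    exact setIntegral_congr_fun measurableSet_Iic fun t _ => (phi_even t).symm
  rw [Phi_eq, Phi_eq, hneg]
  linarith

lemma shift_Iic (a b : ℝ) (f : ℝ → ℝ) :
    (∫ t in Iic (b + a), f t) = ∫ u in Iic b, f (u + a) := by
  have A : MeasurableEmbedding fun x : ℝ => x + a :=
    (Homeomorph.addRight a).isClosedEmbedding.measurableEmbedding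
  have := A.setIntegral_map (μ := volume) f (Iic (b + a))
  rw [map_add_right_eq_self volume a] at this
  rw [this]
  congr 1
  ext u
  simp [le_sub_iff_add_le]

lemma key (a b : ℝ) (ha : 0 < a) : Φ b < Real.exp (a * b + a ^ 2 / 2) * Φ (b + a) := by
  set c := Real.exp (a * b + a ^ 2 / 2) with hc
  have hshift : ∀ u : ℝ, gaussianPDFReal 0 1 (u + a) = gaussianPDFReal (-a) 1 u := by
    intro u; simp [gaussianPDFReal, sub_neg_eq_add]
  have hpt : ∀ u : ℝ, c * gaussianPDFReal (-a) 1 u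
      = gaussianPDFReal 0 1 u * Real.exp (a * (b - u)) := by
    intro u
    simp only [gaussianPDFReal, NNReal.coe_one, mul_one, sub_zero, sub_neg_eq_add, hc]
    rw [mul_comm c, mul_assoc, mul_assoc, ← Real.exp_add, ← Real.exp_add]
    ring_nf
  have h1 : c * Φ (b + a) = ∫ u in Iic b, gaussianPDFReal 0 1 u * Real.exp (a * (b - u)) := by
    rw [Phi_eq, shift_Iic a b]
    simp_rw [hshift]
    rw [← integral_const_mul]
    exact setIntegral_congr_fun measurableSet_Iic fun u _ => hpt u
  have hint1 : IntegrableOn (fun u => gaussianPDFReal 0 1 u * Real.exp (a * (b - u))) (Iic b) := by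
    have : Integrable (fun u => c * gaussianPDFReal (-a) 1 u) :=
      (integrable_gaussianPDFReal (-a) 1).const_mul c
    exact (this.congr (ae_of_all _ fun u => (hpt u))).integrableOn
  have hint2 : IntegrableOn (gaussianPDFReal 0 1) (Iic b) :=
    (integrable_gaussianPDFReal 0 1).integrableOn
  rw [Phi_eq, h1]
  have hdiff : (0:ℝ) < ∫ u in Iic b,
      (gaussianPDFReal 0 1 u * Real.exp (a * (b - u)) - gaussianPDFReal 0 1 u) := by
    rw [setIntegral_pos_iff_support_of_nonneg_ae]
    · refine lt_of_lt_of_le ?_ (measure_mono (?_ : Iio b ⊆ _))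
      · simp [Real.volume_Iio]
      · intro u hu
        have hu' : u < b := hu
        constructor
        · simp only [Function.mem_support]
          have h1 : (1:ℝ) < Real.exp (a * (b - u)) := by
            rw [← Real.exp_zero]
            exact Real.exp_lt_exp.2 (by nlinarith)
          have h2 : 0 < gaussianPDFReal 0 1 u := gaussianPDFReal_pos 0 1 u one_ne_zero
          nlinarith
        · exact le_of_lt hu'
    · filter_upwards [ae_restrict_mem measurableSet_Iic] with u hu
      simp only [Pi.zero_apply]
      have h1 : (1:ℝ) ≤ Real.exp (a * (b - u)) := by
        rw [← Real.exp_zero]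
        exact Real.exp_le_exp.2 (by nlinarith [mem_Iic.1 hu])
      have h2 : 0 ≤ gaussianPDFReal 0 1 u := gaussianPDFReal_nonneg 0 1 u
      nlinarith
    · exact hint1.sub hint2
  rw [integral_sub hint1 hint2] at hdiff
  linarith

/-- The zero-rate Black--Scholes put value strictly exceeds its intrinsic value K − S;
consequently, for 0 < S < K the put-hedging ratio α(S) = x·(K − S)/V_put(S) satisfies
α(S) < x for every reserve size x > 0. -/
theorem put_exceeds_intrinsic (S K σ τ : ℝ) (hS : 0 < S) (hK : 0 < K)
    (hσ : 0 < σ) (hτ : 0 < τ)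
    (d1 d2 : ℝ)
    (hd1 : d1 = (Real.log (S / K) + (σ ^ 2 / 2) * τ) / (σ * Real.sqrt τ))
    (hd2 : d2 = d1 - σ * Real.sqrt τ) :
    K * Φ (-d2) - S * Φ (-d1) > K - S ∧
      (S < K → ∀ x : ℝ, 0 < x →
        x * (K - S) / (K * Φ (-d2) - S * Φ (-d1)) < x) := by
  set a := σ * Real.sqrt τ with haa
  have hsq : Real.sqrt τ > 0 := Real.sqrt_pos.2 hτ
  have ha : 0 < a := mul_pos hσ hsq
  have ha2 : a ^ 2 = σ ^ 2 * τ := by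
    rw [haa, mul_pow, Real.sq_sqrt hτ.le]
  have hlog : Real.log (S / K) = a * d2 + a ^ 2 / 2 := by
    have h1 : d1 * a = Real.log (S / K) + (σ ^ 2 / 2) * τ := by
      rw [hd1]; field_simp
    have : d2 = d1 - a := hd2
    nlinarith
  have hSK : S = K * Real.exp (a * d2 + a ^ 2 / 2) := by
    rw [← hlog, Real.exp_log (div_pos hS hK)]
    field_simp
  have hd1' : d1 = d2 + a := by rw [hd2]; ring
  have hkey := key a d2 ha
  have hmain : K * Φ (-d2) - S * Φ (-d1) > K - S := by
    rw [Phi_neg, Phi_neg, hd1']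
    have : S * Φ (d2 + a) = K * (Real.exp (a * d2 + a ^ 2 / 2) * Φ (d2 + a)) := by
      rw [hSK]; ring
    nlinarith [mul_lt_mul_of_pos_left hkey hK]
  refine ⟨hmain, fun hSlt x hx => ?_⟩
  have hV : 0 < K * Φ (-d2) - S * Φ (-d1) := lt_trans (by linarith) hmain
  rw [div_lt_iff₀ hV]
  calc x * (K - S) < x * (K * Φ (-d2) - S * Φ (-d1)) := by
        exact mul_lt_mul_of_pos_left hmain hx
    _ = _ := rfl
end

section
/- Fix K, σ, τ > 0 and y > 0, let Φ be the standard normal cumulative distribution function, and for S > 0 set d1(S) = (ln(S/K) + (σ²/2)τ)/(σ√τ), d2(S) = d1(S) − σ√τ and β(S) = y·(S − K)/(S·Φ(d1(S)) − K·Φ(d2(S))). Then β(S) tends to y as S tends to +∞. That is, in the limit of the debt asset price increasing without bound, exactly y at-the-money call options fund the debt shortfall of a position of y debt units. -/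
/-! As `S → ∞` both `d1 S` and `d2 S` grow like `log S`, so both normal probabilities tend to `1`;
dividing numerator and denominator of `β S` by `S` leaves `y (1 - K/S) / (Φ (d1 S) - (K/S) Φ (d2 S))`,
which tends to `y / 1`. -/

open Real Filter

open Topology ProbabilityTheory

lemma Φ_eq_cdf : Φ = cdf (gaussianReal 0 1) := by
  funext x
  rw [cdf_eq_real]
  rfl

lemma tendsto_Φ_atTop : Tendsto Φ atTop (𝓝 1) :=
  Φ_eq_cdf ▸ tendsto_cdf_atTop _

lemma tendsto_log_div_add_div_atTop {K c : ℝ} (hK : 0 < K) (hc : 0 < c) (a : ℝ) :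
    Tendsto (fun S => (log (S / K) + a) / c) atTop atTop :=
  (tendsto_atTop_add_const_right _ a
    (tendsto_log_atTop.comp (tendsto_id.atTop_div_const hK))).atTop_div_const hc

lemma tendsto_mul_sub_div_mul_sub_mul {p q : ℝ → ℝ} (hp : Tendsto p atTop (𝓝 1))
    (hq : Tendsto q atTop (𝓝 1)) (K y : ℝ) :
    Tendsto (fun S => y * (S - K) / (S * p S - K * q S)) atTop (𝓝 y) := by
  have hKS : Tendsto (fun S : ℝ => K / S) atTop (𝓝 0) :=
    tendsto_const_nhds.div_atTop tendsto_id
  have hnum : Tendsto (fun S => y * (1 - K / S)) atTop (𝓝 (y * (1 - 0))) :=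
    (tendsto_const_nhds.sub hKS).const_mul y
  have hden : Tendsto (fun S => p S - K / S * q S) atTop (𝓝 (1 - 0 * 1)) :=
    hp.sub (hKS.mul hq)
  have hlim := hnum.div hden (by norm_num)
  simp only [sub_zero, mul_one, div_one] at hlim
  refine hlim.congr' ?_
  filter_upwards [eventually_gt_atTop 0] with S hS
  rw [Pi.div_apply, ← div_div_div_cancel_right₀ hS.ne' (y * (S - K))]
  congr 1 <;> field_simp

theorem beta_tendsto_reserve_general (K σ τ y : ℝ) (hK : 0 < K) (hσ : 0 < σ) (hτ : 0 < τ)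
    (d1 d2 β : ℝ → ℝ)
    (hd1 : ∀ S, d1 S = (Real.log (S / K) + (σ ^ 2 / 2) * τ) / (σ * Real.sqrt τ))
    (hd2 : ∀ S, d2 S = d1 S - σ * Real.sqrt τ)
    (hβ : ∀ S, β S = y * (S - K) / (S * Φ (d1 S) - K * Φ (d2 S))) :
    Filter.Tendsto β Filter.atTop (nhds y) := by
  have hd1_top : Tendsto d1 atTop atTop :=
    (tendsto_log_div_add_div_atTop hK (mul_pos hσ (sqrt_pos.2 hτ)) _).congr fun S => (hd1 S).symm
  have hd2_top : Tendsto d2 atTop atTop :=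
    (tendsto_atTop_add_const_right _ _ hd1_top).congr fun S => (hd2 S).symm
  exact (tendsto_mul_sub_div_mul_sub_mul (tendsto_Φ_atTop.comp hd1_top)
    (tendsto_Φ_atTop.comp hd2_top) K y).congr fun S => (hβ S).symm

/-- As the debt price S → +∞, the call-hedging ratio β(S) = y·(S − K)/V_call(S)
tends to the reserve size y. -/
theorem beta_tendsto_reserve (K σ τ y : ℝ) (hK : 0 < K) (hσ : 0 < σ) (hτ : 0 < τ)
    (hy : 0 < y)
    (d1 d2 β : ℝ → ℝ)
    (hd1 : ∀ S, d1 S = (Real.log (S / K) + (σ ^ 2 / 2) * τ) / (σ * Real.sqrt τ))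
    (hd2 : ∀ S, d2 S = d1 S - σ * Real.sqrt τ)
    (hβ : ∀ S, β S = y * (S - K) / (S * Φ (d1 S) - K * Φ (d2 S))) :
    Filter.Tendsto β Filter.atTop (nhds y) :=
  beta_tendsto_reserve_general K σ τ y hK hσ hτ d1 d2 β hd1 hd2 hβ
end
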